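/- For every polytope Q of dimension d ≥ 2 and every edge e of Q, the graph obtained from the vertex-edge graph of Q by deleting the single edge e (keeping all vertices) is connected; that is, the graph of a polytope of dimension at least 2 is 2-edge-connected. -/

import Mathlib

open Set Classical

/-- Points of `ℝ^N`. -/
abbrev Pt (N : ℕ) := EuclideanSpace ℝ (Fin N)

/-- A polytope: the convex hull of a finite set of points. -/
def IsPolytope {N : ℕ} (Q : Set (Pt N)) : Prop :=
  ∃ S : Set (Pt N), S.Finite ∧ Q = convexHull ℝ S

/-- Dimension of a subset of `ℝ^N`: the dimension of its affine span,
with the empty set having dimension `-1`. -/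
noncomputable def faceDim {N : ℕ} (s : Set (Pt N)) : ℤ :=
  if s = ∅ then -1 else (Module.finrank ℝ (affineSpan ℝ s).direction : ℤ)

/-- A face of a polytope: an exposed subset (this includes `∅` and the polytope itself). -/
def IsFaceOf {N : ℕ} (Q F : Set (Pt N)) : Prop :=
  IsExposed ℝ Q F

/-- A `k`-face: a face of dimension `k`. -/
def IsKFaceOf {N : ℕ} (k : ℕ) (Q F : Set (Pt N)) : Prop :=
  IsFaceOf Q F ∧ faceDim F = k

/-- A vertex: a point spanning a `0`-dimensional face. -/
def IsVertexOf {N : ℕ} (Q : Set (Pt N)) (v : Pt N) : Prop :=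
  IsKFaceOf 0 Q {v}

/-- An affine hyperplane: the zero set of a nonconstant affine functional. -/
def IsHyperplane {N : ℕ} (H : Set (Pt N)) : Prop :=
  ∃ f : Pt N →ᵃ[ℝ] ℝ, f.linear ≠ 0 ∧ H = {x | f x = 0}

/-!
Choose a linear functional `l` that is constant on the edge `e` but not on `Q` (possible since
`dim Q ≥ 2 > dim e`), oriented so that `e` does not lie in the face `F` on which `l` is maximal.
As in the simplex method, from every vertex outside `F` some edge strictly increases `l`, and that
edge is not `e`; so every vertex reaches `F` without using `e`. Inside `F`, the same climbing
argument for a functional exposing a vertex `q` of `F` joins every vertex of `F` to `q` by edges of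
`F`, none of which is `e`.

The climbing step is proved by induction on the number of generating points: tilting a functional
that exposes `v` towards `l` gives a proper face through `v` containing a higher point, unless the
polytope is a segment.
-/

open Filter Topology

namespace ContinuousLinearMap

variable {E : Type*} [NormedAddCommGroup E] [NormedSpace ℝ E] {A S : Set E} {l : E →L[ℝ] ℝ}
  {x y : E}

theorem mem_toExposed : x ∈ l.toExposed A ↔ x ∈ A ∧ ∀ y ∈ A, l y ≤ l x := Iff.rfl

theorem toExposed_subset : l.toExposed A ⊆ A := fun _ hx => hx.1

theorem _root_.IsExposed.exists_eq_toExposed {B : Set E} (h : IsExposed ℝ A B)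
    (hB : B.Nonempty) : ∃ l : E →L[ℝ] ℝ, B = l.toExposed A :=
  h hB

theorem apply_eq_of_mem_toExposed (hx : x ∈ l.toExposed A) (hy : y ∈ l.toExposed A) :
    l x = l y :=
  le_antisymm (hy.2 x hx.1) (hx.2 y hy.1)

theorem apply_lt_of_notMem_toExposed (hx : x ∈ A) (hxA : x ∉ l.toExposed A)
    (hy : y ∈ l.toExposed A) : l x < l y := by
  obtain ⟨z, hz, hxz⟩ : ∃ z ∈ A, l x < l z := by
    simpa [mem_toExposed, hx] using hxA
  exact hxz.trans_le (hy.2 z hz)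

theorem toExposed_nonempty (hS : S.Finite) (hne : S.Nonempty) : (l.toExposed S).Nonempty := by
  obtain ⟨x, hx, hmax⟩ := Set.exists_max_image S l hS hne
  exact ⟨x, hx, hmax⟩

theorem mem_toExposed_convexHull :
    x ∈ l.toExposed (convexHull ℝ S) ↔ x ∈ convexHull ℝ S ∧ ∀ y ∈ S, l y ≤ l x := by
  refine ⟨fun hx => ⟨hx.1, fun y hy => hx.2 y (subset_convexHull ℝ S hy)⟩,
    fun hx => ⟨hx.1, fun y hy => ?_⟩⟩
  obtain ⟨z, hz, hyz⟩ := (l.toLinearMap.convexOn convex_univ).exists_ge_of_mem_convexHull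
    (subset_univ S) hy
  exact hyz.trans (hx.2 z hz)

/-- By Krein–Milman, since the extreme points of the face lie in `S`. -/
theorem toExposed_convexHull (hS : S.Finite) (l : E →L[ℝ] ℝ) :
    l.toExposed (convexHull ℝ S) = convexHull ℝ (l.toExposed S) := by
  have hF : IsExposed ℝ (convexHull ℝ S) (l.toExposed (convexHull ℝ S)) :=
    ContinuousLinearMap.toExposed.isExposed
  have hFconv := hF.convex (convex_convexHull ℝ S)
  refine Subset.antisymm ?_ (convexHull_min (fun x hx =>
    mem_toExposed_convexHull.2 ⟨subset_convexHull ℝ S hx.1, hx.2⟩) hFconv)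
  rw [← closure_convexHull_extremePoints (hF.isCompact (hS.isCompact_convexHull ℝ)) hFconv]
  refine closure_minimal (convexHull_mono fun x hx => ?_)
    ((hS.subset toExposed_subset).isCompact_convexHull ℝ).isClosed
  have hxS : x ∈ S := extremePoints_convexHull_subset
    (hF.isExtreme.extremePoints_subset_extremePoints hx)
  exact ⟨hxS, (mem_toExposed_convexHull.1 hx.1).2⟩

/-- The witness is a small tilt `l + ε • m`: for `ε` small the points of `S` off the face of `l`
stay below it, and on that face `l` is constant. -/
theorem exists_toExposed_eq_toExposed_toExposed (hS : S.Finite) (l m : E →L[ℝ] ℝ)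
    (hne : (m.toExposed (l.toExposed S)).Nonempty) :
    ∃ h : E →L[ℝ] ℝ, h.toExposed S = m.toExposed (l.toExposed S) := by
  obtain ⟨t₀, ht₀⟩ := hne
  have hlim (x : E) : Tendsto (fun ε : ℝ => l x + ε * m x) (𝓝 0) (𝓝 (l x)) := by
    simpa using ((tendsto_id (x := 𝓝 (0 : ℝ))).mul_const (m x)).const_add (l x)
  have hev : ∀ᶠ ε in 𝓝[>] (0 : ℝ), ∀ s ∈ S \ l.toExposed S, l s + ε * m s < l t₀ + ε * m t₀ :=
    (eventually_all_finite hS.sdiff).2 fun s hs => nhdsWithin_le_nhds <|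
      (hlim s).eventually_lt (hlim t₀) (apply_lt_of_notMem_toExposed hs.1 hs.2 ht₀.1)
  obtain ⟨ε, hε, hεpos⟩ := (hev.and self_mem_nhdsWithin).exists
  have happ : ∀ x, (l + ε • m) x = l x + ε * m x := fun x => rfl
  refine ⟨l + ε • m, Subset.antisymm (fun s hs => ?_) (fun s hs => ?_)⟩
  · have hsT : s ∈ l.toExposed S := by
      by_contra hsT
      have h₁ := hs.2 t₀ ht₀.1.1
      rw [happ, happ] at h₁
      linarith [hε s ⟨hs.1, hsT⟩]
    refine ⟨hsT, fun y hy => ?_⟩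
    have := hs.2 y hy.1
    simp only [happ, apply_eq_of_mem_toExposed hy hsT] at this
    exact le_of_mul_le_mul_left (by linarith) hεpos
  · refine ⟨hs.1.1, fun y hy => ?_⟩
    have hls := apply_eq_of_mem_toExposed hs.1 ht₀.1
    have hms := apply_eq_of_mem_toExposed hs ht₀
    simp only [happ]
    by_cases hyT : y ∈ l.toExposed S
    · rw [apply_eq_of_mem_toExposed hyT hs.1]
      have := hs.2 y hyT
      gcongr
    · rw [hls, hms]
      exact (hε y ⟨hy, hyT⟩).le

theorem exists_pos_toExposed_add_smul (hS : S.Finite) {g l : E →L[ℝ] ℝ} {v : E} (hv : v ∈ S)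
    (hg : ∀ s ∈ S, s ≠ v → g s < g v) (hl : ∃ s ∈ S, l v < l s) :
    ∃ t : ℝ, 0 < t ∧ v ∈ (g + t • l).toExposed S ∧ ∃ s ∈ (g + t • l).toExposed S, l v < l s := by
  obtain ⟨s₀, ⟨hs₀S, hs₀⟩, hmin⟩ := Set.exists_min_image {s ∈ S | l v < l s}
    (fun s => (g v - g s) / (l s - l v)) (hS.subset (sep_subset _ _)) hl
  set t := (g v - g s₀) / (l s₀ - l v)
  have ht : 0 < t := div_pos (sub_pos.2 (hg s₀ hs₀S (ne_of_apply_ne l hs₀.ne'))) (sub_pos.2 hs₀)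
  have hs₀v : g s₀ + t * l s₀ = g v + t * l v := by
    have : t * (l s₀ - l v) = g v - g s₀ := div_mul_cancel₀ _ (sub_pos.2 hs₀).ne'
    linarith
  have hle (s : E) (hs : s ∈ S) : g s + t * l s ≤ g v + t * l v := by
    rcases lt_or_ge (l v) (l s) with hls | hls
    · have := (le_div_iff₀ (sub_pos.2 hls)).1 (hmin s ⟨hs, hls⟩)
      linarith
    · have hgs : g s ≤ g v := by
        rcases eq_or_ne s v with rfl | hsv
        exacts [le_rfl, (hg s hs hsv).le]
      nlinarith
  have happ (x : E) : (g + t • l) x = g x + t * l x := rfl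
  refine ⟨t, ht, ⟨hv, fun y hy => ?_⟩, s₀, ⟨hs₀S, fun y hy => ?_⟩, hs₀⟩ <;>
    simp only [happ, hs₀v] <;> exact hle y hy

end ContinuousLinearMap

open ContinuousLinearMap

section

variable {E : Type*} [NormedAddCommGroup E] [NormedSpace ℝ E] {S F G : Set E} {v : E}

theorem IsExposed.trans_of_convexHull (hS : S.Finite) (hF : IsExposed ℝ (convexHull ℝ S) F)
    (hG : IsExposed ℝ F G) : IsExposed ℝ (convexHull ℝ S) G := by
  intro hGne
  obtain ⟨l, rfl⟩ := hF.exists_eq_toExposed (hGne.mono hG.subset)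
  obtain ⟨m, rfl⟩ := hG.exists_eq_toExposed hGne
  have hT : (l.toExposed S).Finite := hS.subset toExposed_subset
  rw [toExposed_convexHull hS, toExposed_convexHull hT] at hGne ⊢
  obtain ⟨h, hh⟩ := exists_toExposed_eq_toExposed_toExposed hS l m
    (convexHull_nonempty_iff.1 hGne)
  exact ⟨h, ((toExposed_convexHull hS h).trans (congrArg _ hh)).symm⟩

theorem exists_clm_lt_of_isExposed_singleton (h : IsExposed ℝ S {v}) :
    ∃ g : E →L[ℝ] ℝ, ∀ y ∈ S, y ≠ v → g y < g v := by
  obtain ⟨g, hg⟩ := h.exists_eq_toExposed (singleton_nonempty v)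
  have hv : v ∈ g.toExposed S := hg ▸ rfl
  refine ⟨g, fun y hy hyv => (hv.2 y hy).lt_of_ne fun hgy => hyv ?_⟩
  have : y ∈ g.toExposed S := ⟨hy, fun z hz => hgy ▸ hv.2 z hz⟩
  rwa [← hg] at this

theorem exists_clm_eq_on_lt_of_not_vectorSpan_le [FiniteDimensional ℝ E] {s t : Set E} {a : E}
    (ha : a ∈ s) (hst : ¬ vectorSpan ℝ t ≤ vectorSpan ℝ s) :
    ∃ l : E →L[ℝ] ℝ, (∀ x ∈ s, l x = l a) ∧ ∃ q ∈ t, l a < l q := by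
  obtain ⟨x, hxt, hxs⟩ := SetLike.not_le_iff_exists.1 hst
  obtain ⟨f, hfx, hf⟩ := Submodule.exists_dual_map_eq_bot_of_notMem hxs inferInstance
  have hfs (y : E) (hy : y ∈ s) : f y = f a := by
    have := hf ▸ Submodule.mem_map_of_mem (f := f) (vsub_mem_vectorSpan ℝ hy ha)
    simpa [sub_eq_zero] using this
  obtain ⟨q, hq, hfq⟩ : ∃ q ∈ t, f q ≠ f a := by
    by_contra! h
    refine hfx ((?_ : vectorSpan ℝ t ≤ LinearMap.ker f) hxt)
    rw [vectorSpan_def, Submodule.span_le]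
    rintro _ ⟨p, hp, p', hp', rfl⟩
    simp [h p hp, h p' hp']
  set L := LinearMap.toContinuousLinearMap f
  rcases hfq.lt_or_gt with h | h
  · exact ⟨-L, fun y hy => by simp [L, hfs y hy], q, hq, by simpa [L] using h⟩
  · exact ⟨L, hfs, q, hq, h⟩

theorem Collinear.toExposed_subsingleton (hS : Collinear ℝ S) {l : E →L[ℝ] ℝ} {x y : E}
    (hx : x ∈ S) (hy : y ∈ S) (hxy : l x ≠ l y) : (l.toExposed S).Subsingleton := by
  obtain ⟨p₀, u, hu⟩ := (collinear_iff_exists_forall_eq_smul_vadd S).1 hS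
  have hlu : l u ≠ 0 := by
    obtain ⟨r, rfl⟩ := hu x hx
    obtain ⟨r', rfl⟩ := hu y hy
    contrapose! hxy
    simp [hxy]
  intro b hb b' hb'
  obtain ⟨r, rfl⟩ := hu b hb.1
  obtain ⟨r', rfl⟩ := hu b' hb'.1
  have := apply_eq_of_mem_toExposed hb hb'
  simp only [vadd_eq_add, map_add, map_smul, smul_eq_mul, add_left_inj] at this
  rw [mul_right_cancel₀ hlu this]

end

/-- A point of `S` farthest from the origin is exposed by its own inner product. -/
theorem exists_toExposed_eq_singleton {E : Type*} [NormedAddCommGroup E] [InnerProductSpace ℝ E]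
    {S : Set E} (hS : S.Finite) (hne : S.Nonempty) :
    ∃ (l : E →L[ℝ] ℝ) (w : E), l.toExposed S = {w} := by
  obtain ⟨w, hw, hmax⟩ := Set.exists_max_image S (‖·‖) hS hne
  refine ⟨innerSL ℝ w, w, Subset.antisymm (fun y hy => ?_)
    (singleton_subset_iff.2 ⟨hw, fun y hy => ?_⟩)⟩
  · have h1 : ‖w‖ ^ 2 ≤ inner ℝ w y := by simpa [real_inner_self_eq_norm_sq] using hy.2 w hw
    have h2 := hmax y hy.1
    have : ‖y - w‖ ^ 2 ≤ 0 := by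
      rw [norm_sub_sq_real, real_inner_comm]
      nlinarith [norm_nonneg y]
    simpa [sub_eq_zero] using this
  · simpa [real_inner_self_eq_norm_sq, sq] using
      (real_inner_le_norm w y).trans (mul_le_mul_of_nonneg_left (hmax y hy) (norm_nonneg w))

theorem SimpleGraph.exists_reachable_of_forall_exists_adj_lt {V α : Type*} [Finite V] [Preorder α]
    (G : SimpleGraph V) (φ : V → α) {s t : Set V}
    (h : ∀ x ∈ s, x ∉ t → ∃ y ∈ s, G.Adj x y ∧ φ x < φ y) {x : V} (hx : x ∈ s) :
    ∃ y ∈ t, G.Reachable x y := by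
  have : IsTrans V fun y x => φ x < φ y := ⟨fun _ _ _ h₁ h₂ => h₂.trans h₁⟩
  have : Std.Irrefl fun y x : V => φ x < φ y := ⟨fun _ => lt_irrefl _⟩
  induction x using (Finite.wellFounded_of_trans_of_irrefl fun y x : V => φ x < φ y).induction with
  | _ x ih =>
  by_cases hxt : x ∈ t
  · exact ⟨x, hxt, .refl x⟩
  obtain ⟨y, hys, hxy, hφ⟩ := h x hx hxt
  obtain ⟨z, hzt, hyz⟩ := ih y hφ hys
  exact ⟨z, hzt, hxy.reachable.trans hyz⟩

section Polytope

variable {N : ℕ} {S Q F e : Set (Pt N)} {v w : Pt N}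

theorem faceDim_of_nonempty (h : S.Nonempty) :
    faceDim S = (Module.finrank ℝ (vectorSpan ℝ S) : ℤ) := by
  rw [faceDim, if_neg h.ne_empty, direction_affineSpan]

theorem nonempty_of_faceDim_eq {k : ℕ} (h : faceDim S = k) : S.Nonempty := by
  rw [nonempty_iff_ne_empty]
  rintro rfl
  simp [faceDim] at h

theorem faceDim_convexHull (S : Set (Pt N)) : faceDim (convexHull ℝ S) = faceDim S := by
  rcases S.eq_empty_or_nonempty with rfl | h
  · rw [convexHull_empty]
  · rw [faceDim_of_nonempty h, faceDim_of_nonempty h.convexHull, ← direction_affineSpan,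
      affineSpan_convexHull, direction_affineSpan]

theorem faceDim_singleton (v : Pt N) : faceDim {v} = 0 := by
  simp [faceDim_of_nonempty (singleton_nonempty v)]

theorem Collinear.faceDim_convexHull (h : Collinear ℝ S) (hv : v ∈ S) (hw : w ∈ S)
    (hvw : v ≠ w) : faceDim (convexHull ℝ S) = 1 := by
  rw [_root_.faceDim_convexHull, faceDim_of_nonempty ⟨v, hv⟩, ← direction_affineSpan,
    ← h.affineSpan_eq_of_ne hv hw hvw, direction_affineSpan, vectorSpan_pair,
    finrank_span_singleton (vsub_ne_zero.2 hvw), Nat.cast_one]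

theorem isVertexOf_iff : IsVertexOf Q v ↔ IsExposed ℝ Q {v} :=
  ⟨fun h => h.1, fun h => ⟨h, by rw [faceDim_singleton]; rfl⟩⟩

theorem IsVertexOf.mem (h : IsVertexOf Q v) : v ∈ Q :=
  h.1.subset rfl

theorem IsVertexOf.mem_of_convexHull (h : IsVertexOf (convexHull ℝ S) v) : v ∈ S :=
  extremePoints_convexHull_subset (h.1.isExtreme.mem_extremePoints)

theorem IsVertexOf.mono (h : IsVertexOf Q v) (hv : v ∈ F) (hFQ : F ⊆ Q) : IsVertexOf F v :=
  isVertexOf_iff.2 (h.1.mono hFQ (singleton_subset_iff.2 hv))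

theorem IsKFaceOf.trans_of_convexHull {k : ℕ} {G : Set (Pt N)} (h : IsKFaceOf k F G)
    (hS : S.Finite) (hF : IsExposed ℝ (convexHull ℝ S) F) : IsKFaceOf k (convexHull ℝ S) G :=
  ⟨hF.trans_of_convexHull hS h.1, h.2⟩

theorem isVertexOf_of_toExposed_eq_singleton (hS : S.Finite) {l : Pt N →L[ℝ] ℝ}
    (h : l.toExposed S = {w}) : IsVertexOf (convexHull ℝ S) w := by
  have := toExposed_convexHull hS l
  rw [h, convexHull_singleton] at this
  exact isVertexOf_iff.2 (this ▸ ContinuousLinearMap.toExposed.isExposed)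

theorem exists_isVertexOf_convexHull (hS : S.Finite) (hne : S.Nonempty) :
    ∃ v, IsVertexOf (convexHull ℝ S) v := by
  obtain ⟨l, w, h⟩ := exists_toExposed_eq_singleton hS hne
  exact ⟨w, isVertexOf_of_toExposed_eq_singleton hS h⟩

theorem Collinear.exists_edge_apply_lt (hcol : Collinear ℝ S) (hS : S.Finite) {s : Pt N}
    {l : Pt N →L[ℝ] ℝ} (hv : v ∈ S) (hs : s ∈ S) (hl : l v < l s) :
    ∃ ε w, IsKFaceOf 1 (convexHull ℝ S) ε ∧ v ∈ ε ∧ w ∈ ε ∧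
      IsVertexOf (convexHull ℝ S) w ∧ l v < l w := by
  obtain ⟨w, hw⟩ := toExposed_nonempty hS ⟨v, hv⟩ (l := l)
  have hlw : l v < l w := hl.trans_le (hw.2 s hs)
  refine ⟨convexHull ℝ S, w, ⟨IsExposed.refl _, ?_⟩, subset_convexHull ℝ S hv,
    subset_convexHull ℝ S hw.1, isVertexOf_of_toExposed_eq_singleton hS
      ((hcol.toExposed_subsingleton hv hs hl.ne).eq_singleton_of_mem hw), hlw⟩
  rw [hcol.faceDim_convexHull hv hw.1 (ne_of_apply_ne l hlw.ne)]
  rfl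

theorem IsVertexOf.exists_edge_apply_lt (hv : IsVertexOf (convexHull ℝ S) v) (hS : S.Finite)
    (l : Pt N →L[ℝ] ℝ) (hl : ∃ s ∈ S, l v < l s) :
    ∃ ε w, IsKFaceOf 1 (convexHull ℝ S) ε ∧ v ∈ ε ∧ w ∈ ε ∧
      IsVertexOf (convexHull ℝ S) w ∧ l v < l w := by
  induction hn : S.ncard using Nat.strong_induction_on generalizing S with
  | _ n ih =>
  have hvS := hv.mem_of_convexHull
  have descend (h : Pt N →L[ℝ] ℝ) (hTS : h.toExposed S ≠ S) (hvT : v ∈ h.toExposed S)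
      (hlT : ∃ s ∈ h.toExposed S, l v < l s) :
      ∃ ε w, IsKFaceOf 1 (convexHull ℝ S) ε ∧ v ∈ ε ∧ w ∈ ε ∧
        IsVertexOf (convexHull ℝ S) w ∧ l v < l w := by
    have hface : IsExposed ℝ (convexHull ℝ S) (convexHull ℝ (h.toExposed S)) :=
      toExposed_convexHull hS h ▸ ContinuousLinearMap.toExposed.isExposed
    obtain ⟨ε, w, hε, hvε, hwε, hw, hlw⟩ :=
      ih _ (hn ▸ ncard_lt_ncard (ssubset_of_subset_of_ne toExposed_subset hTS) hS)
        (hv.mono (subset_convexHull ℝ _ hvT) hface.subset) (hS.subset toExposed_subset) hlT rfl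
    exact ⟨ε, w, hε.trans_of_convexHull hS hface, hvε, hwε, hw.trans_of_convexHull hS hface, hlw⟩
  obtain ⟨s₁, hs₁, hls₁⟩ := hl
  by_cases hcol : Collinear ℝ S
  · exact hcol.exists_edge_apply_lt hS hvS hs₁ hls₁
  obtain ⟨g, hg⟩ := exists_clm_lt_of_isExposed_singleton hv.1
  have hgS (s : Pt N) (hs : s ∈ S) : s ≠ v → g s < g v := hg s (subset_convexHull ℝ S hs)
  obtain ⟨t, ht, hvT, hlT⟩ := exists_pos_toExposed_add_smul hS hvS hgS ⟨s₁, hs₁, hls₁⟩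
  obtain hTS | hTS := ne_or_eq ((g + t • l).toExposed S) S
  · exact descend _ hTS hvT hlT
  -- Now `S` lies in the hyperplane `g + t • l = g v + t • l v`, so `v` is the unique
  -- minimizer of `l` on `S`, and any proper face through `v` and another point will do.
  have hall (s : Pt N) (hs : s ∈ S) (hsv : s ≠ v) : l v < l s := by
    have h₁ := hgS s hs hsv
    rw [← hTS] at hs
    have h₂ := hs.2 v hvS
    simp only [add_apply, smul_apply, smul_eq_mul] at h₂
    nlinarith
  have hspan : ¬ vectorSpan ℝ S ≤ vectorSpan ℝ {v, s₁} := fun h =>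
    hcol ((Submodule.rank_mono h).trans (collinear_pair ℝ v s₁))
  obtain ⟨l', hl'v, hl'⟩ := exists_clm_eq_on_lt_of_not_vectorSpan_le (mem_insert v {s₁}) hspan
  obtain ⟨t', -, hvT', s', hs', hls'⟩ := exists_pos_toExposed_add_smul hS hvS hgS hl'
  have hs₁T' : s₁ ∉ (g + t' • l').toExposed S := fun h => by
    have h₁ := h.2 v hvS
    have h₂ := hgS s₁ hs₁ (ne_of_apply_ne l hls₁.ne')
    have h₃ := hl'v s₁ (mem_insert_of_mem v rfl)
    simp only [add_apply, smul_apply, smul_eq_mul, h₃] at h₁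
    linarith
  exact descend _ (fun h => hs₁T' (h.symm ▸ hs₁)) hvT'
    ⟨s', hs', hall s' hs'.1 (ne_of_apply_ne l' hls'.ne')⟩

def vertexEdgeGraphWithout (Q e : Set (Pt N)) : SimpleGraph {v : Pt N // IsVertexOf Q v} :=
  SimpleGraph.fromRel fun x y =>
    ∃ ε : Set (Pt N), IsKFaceOf 1 Q ε ∧ ε ≠ e ∧ (x : Pt N) ∈ ε ∧ (y : Pt N) ∈ ε

theorem vertexEdgeGraphWithout_adj_of_mem {ε : Set (Pt N)} {x y : {v : Pt N // IsVertexOf Q v}}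
    (hε : IsKFaceOf 1 Q ε) (hεe : ε ≠ e) (hx : (x : Pt N) ∈ ε) (hy : (y : Pt N) ∈ ε)
    (hxy : (x : Pt N) ≠ y) : (vertexEdgeGraphWithout Q e).Adj x y :=
  (SimpleGraph.fromRel_adj _ _ _).2
    ⟨fun h => hxy (congrArg Subtype.val h), .inl ⟨ε, hε, hεe, hx, hy⟩⟩

theorem finite_isVertexOf_convexHull (hS : S.Finite) :
    Finite {v : Pt N // IsVertexOf (convexHull ℝ S) v} :=
  Set.Finite.to_subtype (s := {v | IsVertexOf (convexHull ℝ S) v})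
    (hS.subset fun _ hv => IsVertexOf.mem_of_convexHull hv)

theorem exists_reachable_mem_toExposed (hS : S.Finite) {l : Pt N →L[ℝ] ℝ}
    {c : ℝ} (he : ∀ x ∈ e, l x = c) (x : {v : Pt N // IsVertexOf (convexHull ℝ S) v}) :
    ∃ y : {v : Pt N // IsVertexOf (convexHull ℝ S) v}, (y : Pt N) ∈ l.toExposed (convexHull ℝ S) ∧
      (vertexEdgeGraphWithout (convexHull ℝ S) e).Reachable x y := by
  have := finite_isVertexOf_convexHull hS
  refine (vertexEdgeGraphWithout _ e).exists_reachable_of_forall_exists_adj_lt (fun v => l v)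
    (s := univ) (t := {y | (y : Pt N) ∈ l.toExposed (convexHull ℝ S)}) ?_ (mem_univ x)
  rintro ⟨v, hv⟩ - hvt
  have hl : ∃ s ∈ S, l v < l s := by
    simpa [mem_toExposed_convexHull, hv.mem] using hvt
  obtain ⟨ε, w, hε, hvε, hwε, hw, hlw⟩ := hv.exists_edge_apply_lt hS l hl
  refine ⟨⟨w, hw⟩, mem_univ _, vertexEdgeGraphWithout_adj_of_mem hε ?_ hvε hwε
    (ne_of_apply_ne l hlw.ne), hlw⟩
  rintro rfl
  exact hlw.ne ((he v hvε).trans (he w hwε).symm)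

theorem reachable_of_mem_isExposed (hS : S.Finite) (hF : IsExposed ℝ (convexHull ℝ S) F)
    (heF : ¬ e ⊆ F) {p q : {v : Pt N // IsVertexOf (convexHull ℝ S) v}} (hp : (p : Pt N) ∈ F)
    (hq : (q : Pt N) ∈ F) : (vertexEdgeGraphWithout (convexHull ℝ S) e).Reachable p q := by
  have := finite_isVertexOf_convexHull hS
  obtain ⟨l, rfl⟩ := hF.exists_eq_toExposed ⟨q, hq⟩
  have hT : (l.toExposed S).Finite := hS.subset toExposed_subset
  rw [toExposed_convexHull hS] at hF hp hq heF
  have hqT := q.2.mono hq hF.subset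
  obtain ⟨m, hm⟩ := exists_clm_lt_of_isExposed_singleton hqT.1
  refine ((vertexEdgeGraphWithout _ e).exists_reachable_of_forall_exists_adj_lt (fun v => m v)
    (s := {v | ↑v ∈ convexHull ℝ (l.toExposed S)}) (t := {q}) ?_ hp).elim
    fun y ⟨hy, hpy⟩ => mem_singleton_iff.1 hy ▸ hpy
  rintro ⟨x, hx⟩ hxF hxq
  have hxq : x ≠ q := fun h => hxq (Subtype.ext h)
  obtain ⟨ε, w, hε, hxε, hwε, hw, hmw⟩ := (hx.mono hxF hF.subset).exists_edge_apply_lt hT m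
    ⟨q, hqT.mem_of_convexHull, hm x hxF hxq⟩
  have hεF := hε.1.subset
  exact ⟨⟨w, hw.trans_of_convexHull hS hF⟩, hεF hwε, vertexEdgeGraphWithout_adj_of_mem
    (hε.trans_of_convexHull hS hF) (fun h => heF (h ▸ hεF)) hxε hwε (ne_of_apply_ne m hmw.ne),
    hmw⟩

end Polytope

/-- The vertex-edge graph of a polytope of dimension at least
`2` remains connected after deleting any single edge. -/
theorem polytope_graph_two_edge_connected {N d : ℕ} (Q e : Set (Pt N))
    (hQ : IsPolytope Q) (hd : faceDim Q = d) (hd2 : 2 ≤ d)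
    (he : IsKFaceOf 1 Q e) :
    (SimpleGraph.fromRel (fun x y : {v : Pt N // IsVertexOf Q v} =>
      ∃ ε : Set (Pt N), IsKFaceOf 1 Q ε ∧ ε ≠ e ∧ (x : Pt N) ∈ ε ∧ (y : Pt N) ∈ ε)).Connected := by
  obtain ⟨S, hS, rfl⟩ := hQ
  obtain ⟨heQ, he1⟩ := he
  obtain ⟨a, ha⟩ := nonempty_of_faceDim_eq he1
  rw [faceDim_of_nonempty ⟨a, heQ.subset ha⟩] at hd
  rw [faceDim_of_nonempty ⟨a, ha⟩] at he1
  have hspan : ¬ vectorSpan ℝ (convexHull ℝ S) ≤ vectorSpan ℝ e := fun h => by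
    have := Submodule.finrank_mono h
    omega
  obtain ⟨l, hle, q, hq, hlq⟩ := exists_clm_eq_on_lt_of_not_vectorSpan_le ha hspan
  have heF : ¬ e ⊆ l.toExposed (convexHull ℝ S) := fun h => hlq.not_ge ((h ha).2 q hq)
  obtain ⟨v, hv⟩ := exists_isVertexOf_convexHull hS
    (convexHull_nonempty_iff.1 ⟨a, heQ.subset ha⟩)
  refine (SimpleGraph.connected_iff _).2 ⟨fun x y => ?_, ⟨⟨v, hv⟩⟩⟩
  obtain ⟨x', hx', hxx'⟩ := exists_reachable_mem_toExposed hS hle x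
  obtain ⟨y', hy', hyy'⟩ := exists_reachable_mem_toExposed hS hle y
  exact hxx'.trans ((reachable_of_mem_isExposed hS ContinuousLinearMap.toExposed.isExposed heF
    hx' hy').trans hyy'.symm)
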